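/- Let D ≥ 2, suppose v ≠ 0 and a_i > 0 for every i. Then there exists γ* ∈ (0, ∞) such that L_D(γ) < c for all 0 < γ < γ* (feature learning phase) and L_D(γ) = c for all γ ≥ γ* (trivial phase). -/

import Mathlib

/-- The depth-`D` effective loss
ℓ̄_D(b, γ) = −Σᵢ d₀^{2D} b^{2D} vᵢ² / (d₀^D (σ²+d₀)^D aᵢ b^{2D} + γ) + c + γ D d₀² b². -/
noncomputable def effLoss {n : ℕ} (d₀ : ℕ) (σ : ℝ) (v a : Fin n → ℝ) (c : ℝ)
    (D : ℕ) (b γ : ℝ) : ℝ :=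
  -∑ i, (d₀ : ℝ) ^ (2 * D) * b ^ (2 * D) * (v i) ^ 2 /
      ((d₀ : ℝ) ^ D * (σ ^ 2 + (d₀ : ℝ)) ^ D * a i * b ^ (2 * D) + γ)
    + c + γ * (D : ℝ) * (d₀ : ℝ) ^ 2 * b ^ 2

/-!
Write the loss as `-∑ A b^{2D} vᵢ² / (K aᵢ b^{2D} + γ) + c + γ E b²` with `K, A, E > 0`.
For fixed `b` it is continuous and nondecreasing in `γ > 0`, equals `c` at `b = 0`, and is
bounded below, so `γ*` can be taken as the supremum of the `γ` at which some `b` beats `c`.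
This set is nonempty because at `b = 1` the loss tends to `c - ∑ A vᵢ² / (K aᵢ) < c` as `γ → 0`,
and bounded because for `γ ≥ 1` the feature term is `O(b²)` uniformly in `γ` (as `b^{2D} ≤ b²`
when `b² ≤ 1`), so the penalty `γ E b²` dominates it once `γ` is large.
-/
open Set

theorem exists_threshold_of_monotoneOn {ι : Type*} {f : ι → ℝ → ℝ} {c : ℝ} (b₀ : ι)
    (hb₀ : ∀ γ, f b₀ γ = c) (hbdd : ∀ γ, 0 < γ → BddBelow (range fun b => f b γ))
    (hmono : ∀ b, MonotoneOn (f b) (Ioi 0)) (hcont : ∀ b, ContinuousOn (f b) (Ioi 0))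
    (hsmall : ∃ γ₀ > 0, ∃ b, f b γ₀ < c) (hlarge : ∃ Γ > 0, ∀ b, c ≤ f b Γ) :
    ∃ γstar : ℝ, 0 < γstar ∧
      (∀ γ : ℝ, 0 < γ → γ < γstar → (⨅ b, f b γ) < c) ∧
      (∀ γ : ℝ, γstar ≤ γ → (⨅ b, f b γ) = c) := by
  obtain ⟨γ₀, hγ₀, b₁, hb₁⟩ := hsmall
  obtain ⟨Γ, hΓ, hΓc⟩ := hlarge
  set S := {γ : ℝ | 0 < γ ∧ ∃ b, f b γ < c}
  have hγ₀S : γ₀ ∈ S := ⟨hγ₀, b₁, hb₁⟩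
  have hSbdd : BddAbove S := by
    refine ⟨Γ, fun γ ⟨hγ, b, hb⟩ => ?_⟩
    by_contra! hΓγ
    exact (hΓc b).not_gt ((hmono b hΓ hγ hΓγ.le).trans_lt hb)
  have hpos : 0 < sSup S := hγ₀.trans_le (le_csSup hSbdd hγ₀S)
  refine ⟨sSup S, hpos, fun γ hγ hγlt => ?_, fun γ hγ => ?_⟩
  · obtain ⟨γ', ⟨hγ', b, hb⟩, hγγ'⟩ := exists_lt_of_lt_csSup ⟨γ₀, hγ₀S⟩ hγlt
    exact (ciInf_le (hbdd γ hγ) b).trans_lt ((hmono b hγ hγ' hγγ'.le).trans_lt hb)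
  have hγpos : 0 < γ := hpos.trans_le hγ
  -- Were `f b γ < c`, continuity would put some `t > γ ≥ sSup S` into `S`.
  have hge : ∀ b, c ≤ f b γ := by
    intro b
    by_contra! hb
    obtain ⟨t, hγt, ht⟩ := (((hcont b).continuousAt (Ioi_mem_nhds hγpos)).eventually_lt
      continuousAt_const hb).exists_gt
    exact hγt.not_ge ((le_csSup hSbdd ⟨hγpos.trans hγt, b, ht⟩).trans hγ)
  have : Nonempty ι := ⟨b₀⟩
  exact le_antisymm ((ciInf_le (hbdd γ hγpos) b₀).trans_eq (hb₀ γ)) (le_ciInf hge)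

section FeatureTerm

variable {A K p w α γ : ℝ}

theorem feature_term_le_saturated (hA : 0 ≤ A) (hw : 0 ≤ w) (hKα : 0 < K * α) (hp : 0 ≤ p)
    (hγ : 0 < γ) : A * p * w / (K * α * p + γ) ≤ A * w / (K * α) := by
  rw [div_le_div_iff₀ (by positivity) hKα]
  nlinarith [mul_nonneg (mul_nonneg hA hw) hγ.le]

theorem feature_term_le_div (hA : 0 ≤ A) (hw : 0 ≤ w) (hKα : 0 ≤ K * α) (hp : 0 ≤ p)
    (hγ : 0 < γ) : A * p * w / (K * α * p + γ) ≤ A * p * w / γ :=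
  div_le_div_of_nonneg_left (by positivity) hγ (le_add_of_nonneg_left (by positivity))

theorem feature_term_antitoneOn (hA : 0 ≤ A) (hw : 0 ≤ w) (hKα : 0 ≤ K * α) (hp : 0 ≤ p) :
    AntitoneOn (fun γ => A * p * w / (K * α * p + γ)) (Ioi 0) :=
  fun _ hγ₁ _ _ h => div_le_div_of_nonneg_left (by positivity)
    (add_pos_of_nonneg_of_pos (by positivity) hγ₁) (by linarith)

theorem feature_term_le_mul_sq (hA : 0 ≤ A) (hw : 0 ≤ w) (hKα : 0 < K * α) {D : ℕ}
    (hD : D ≠ 0) (hγ : 1 ≤ γ) (b : ℝ) :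
    A * b ^ (2 * D) * w / (K * α * b ^ (2 * D) + γ) ≤ A * w * (1 + (K * α)⁻¹) * b ^ 2 := by
  have hAw : 0 ≤ A * w := mul_nonneg hA hw
  have hp : 0 ≤ b ^ (2 * D) := (even_two_mul D).pow_nonneg b
  rcases le_total (b ^ 2) 1 with hb | hb
  · have hpb : b ^ (2 * D) ≤ b ^ 2 := by
      rw [pow_mul]; exact pow_le_of_le_one (sq_nonneg b) hb hD
    calc A * b ^ (2 * D) * w / (K * α * b ^ (2 * D) + γ)
        ≤ A * b ^ (2 * D) * w / γ := feature_term_le_div hA hw hKα.le hp (by linarith)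
      _ ≤ A * b ^ (2 * D) * w := div_le_self (by positivity) hγ
      _ ≤ A * w * b ^ 2 := by nlinarith
      _ ≤ A * w * (1 + (K * α)⁻¹) * b ^ 2 := by
        have : 0 ≤ A * w * (K * α)⁻¹ * b ^ 2 := by positivity
        nlinarith
  · calc A * b ^ (2 * D) * w / (K * α * b ^ (2 * D) + γ)
        ≤ A * w / (K * α) := feature_term_le_saturated hA hw hKα hp (by linarith)
      _ = A * w * (K * α)⁻¹ := div_eq_mul_inv _ _
      _ ≤ A * w * (1 + (K * α)⁻¹) * b ^ 2 := by
        have : 0 ≤ A * w * (K * α)⁻¹ := by positivity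
        nlinarith

end FeatureTerm

noncomputable def reducedLoss {ι : Type*} [Fintype ι] (K A E : ℝ) (v a : ι → ℝ) (c : ℝ) (D : ℕ)
    (b γ : ℝ) : ℝ :=
  -∑ i, A * b ^ (2 * D) * v i ^ 2 / (K * a i * b ^ (2 * D) + γ) + c + γ * E * b ^ 2

theorem effLoss_eq_reducedLoss {n : ℕ} (d₀ : ℕ) (σ : ℝ) (v a : Fin n → ℝ) (c : ℝ) (D : ℕ) :
    effLoss d₀ σ v a c D =
      reducedLoss ((d₀ : ℝ) ^ D * (σ ^ 2 + d₀) ^ D) ((d₀ : ℝ) ^ (2 * D)) (D * (d₀ : ℝ) ^ 2)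
        v a c D := by
  ext b γ
  simp only [effLoss, reducedLoss]
  ring

section ReducedLoss

variable {ι : Type*} [Fintype ι] {K A E : ℝ} {v a : ι → ℝ} {c : ℝ} {D : ℕ}

theorem reducedLoss_zero_left (hD : D ≠ 0) (γ : ℝ) : reducedLoss K A E v a c D 0 γ = c := by
  simp [reducedLoss, hD]

theorem continuousAt_reducedLoss {b γ : ℝ} (h : ∀ i, K * a i * b ^ (2 * D) + γ ≠ 0) :
    ContinuousAt (reducedLoss K A E v a c D b) γ := by
  unfold reducedLoss
  fun_prop (disch := exact h _)

theorem continuousOn_reducedLoss (hK : 0 ≤ K) (ha : ∀ i, 0 ≤ a i) (b : ℝ) :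
    ContinuousOn (reducedLoss K A E v a c D b) (Ioi 0) := fun _ hγ =>
  (continuousAt_reducedLoss fun i => (add_pos_of_nonneg_of_pos
    (mul_nonneg (mul_nonneg hK (ha i)) ((even_two_mul D).pow_nonneg b)) hγ).ne').continuousWithinAt

theorem monotoneOn_reducedLoss (hK : 0 ≤ K) (hA : 0 ≤ A) (hE : 0 ≤ E) (ha : ∀ i, 0 ≤ a i)
    (b : ℝ) : MonotoneOn (reducedLoss K A E v a c D b) (Ioi 0) := by
  intro γ₁ hγ₁ γ₂ hγ₂ hγ
  have hfeature := Finset.sum_le_sum fun i (_ : i ∈ Finset.univ) =>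
    feature_term_antitoneOn hA (sq_nonneg (v i)) (mul_nonneg hK (ha i))
      ((even_two_mul D).pow_nonneg b) hγ₁ hγ₂ hγ
  have hpenalty : γ₁ * E * b ^ 2 ≤ γ₂ * E * b ^ 2 := by gcongr
  simp only [reducedLoss]
  linarith

theorem bddBelow_range_reducedLoss (hK : 0 < K) (hA : 0 ≤ A) (hE : 0 ≤ E) (ha : ∀ i, 0 < a i)
    {γ : ℝ} (hγ : 0 < γ) : BddBelow (range fun b => reducedLoss K A E v a c D b γ) := by
  refine ⟨c - ∑ i, A * v i ^ 2 / (K * a i), ?_⟩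
  rintro _ ⟨b, rfl⟩
  have hfeature := Finset.sum_le_sum fun i (_ : i ∈ Finset.univ) =>
    feature_term_le_saturated hA (sq_nonneg (v i)) (mul_pos hK (ha i))
      ((even_two_mul D).pow_nonneg b) hγ
  have hpenalty : 0 ≤ γ * E * b ^ 2 := by positivity
  simp only [reducedLoss]
  linarith

theorem exists_reducedLoss_lt (hK : 0 < K) (hA : 0 < A) (ha : ∀ i, 0 < a i) (hv : v ≠ 0) :
    ∃ γ₀ > 0, ∃ b, reducedLoss K A E v a c D b γ₀ < c := by
  obtain ⟨j, hj⟩ := Function.ne_iff.mp hv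
  have hgain : 0 < ∑ i, A * v i ^ 2 / (K * a i) :=
    Finset.sum_pos' (fun i _ => by have := ha i; positivity)
      ⟨j, Finset.mem_univ j, div_pos (mul_pos hA (sq_pos_of_ne_zero hj)) (mul_pos hK (ha j))⟩
  have hzero : reducedLoss K A E v a c D 1 0 < c := by
    simp only [reducedLoss, one_pow, mul_one, add_zero, zero_mul]
    linarith
  have hcont : ContinuousAt (reducedLoss K A E v a c D 1) 0 :=
    continuousAt_reducedLoss fun i => by simpa using (mul_pos hK (ha i)).ne'
  obtain ⟨γ₀, hγ₀, hlt⟩ := (hcont.eventually_lt continuousAt_const hzero).exists_gt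
  exact ⟨γ₀, hγ₀, 1, hlt⟩

theorem exists_le_reducedLoss (hK : 0 < K) (hA : 0 ≤ A) (hE : 0 < E) (ha : ∀ i, 0 < a i)
    (hD : D ≠ 0) : ∃ Γ > 0, ∀ b, c ≤ reducedLoss K A E v a c D b Γ := by
  set C := ∑ i, A * v i ^ 2 * (1 + (K * a i)⁻¹)
  refine ⟨max 1 (C / E), by positivity, fun b => ?_⟩
  have hΓ : C ≤ max 1 (C / E) * E := (div_le_iff₀ hE).mp (le_max_right _ _)
  have hfeature : ∑ i, A * b ^ (2 * D) * v i ^ 2 / (K * a i * b ^ (2 * D) + max 1 (C / E))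
      ≤ C * b ^ 2 := by
    rw [Finset.sum_mul]
    exact Finset.sum_le_sum fun i _ => feature_term_le_mul_sq hA (sq_nonneg (v i))
      (mul_pos hK (ha i)) hD (le_max_left _ _) b
  have hpenalty : C * b ^ 2 ≤ max 1 (C / E) * E * b ^ 2 := by gcongr
  simp only [reducedLoss]
  linarith

theorem reducedLoss_two_phases (hK : 0 < K) (hA : 0 < A) (hE : 0 < E) (ha : ∀ i, 0 < a i)
    (hv : v ≠ 0) (hD : D ≠ 0) :
    ∃ γstar : ℝ, 0 < γstar ∧
      (∀ γ : ℝ, 0 < γ → γ < γstar → (⨅ b, reducedLoss K A E v a c D b γ) < c) ∧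
      (∀ γ : ℝ, γstar ≤ γ → (⨅ b, reducedLoss K A E v a c D b γ) = c) :=
  exists_threshold_of_monotoneOn 0 (reducedLoss_zero_left hD)
    (fun _ => bddBelow_range_reducedLoss hK hA.le hE.le ha)
    (monotoneOn_reducedLoss hK.le hA.le hE.le fun i => (ha i).le)
    (continuousOn_reducedLoss hK.le fun i => (ha i).le)
    (exists_reducedLoss_lt hK hA ha hv) (exists_le_reducedLoss hK hA.le hE ha hD)

end ReducedLoss

theorem deep_two_phases_general {n : ℕ} (d₀ : ℕ) (hd₀ : 0 < d₀) (σ : ℝ)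
    (v a : Fin n → ℝ) (hv : v ≠ 0) (ha : ∀ i, 0 < a i) (c : ℝ)
    (D : ℕ) (hD : 2 ≤ D) :
    ∃ γstar : ℝ, 0 < γstar ∧
      (∀ γ : ℝ, 0 < γ → γ < γstar → (⨅ b : ℝ, effLoss d₀ σ v a c D b γ) < c) ∧
      (∀ γ : ℝ, γstar ≤ γ → (⨅ b : ℝ, effLoss d₀ σ v a c D b γ) = c) := by
  have hd₀' : (0 : ℝ) < d₀ := Nat.cast_pos.mpr hd₀
  have hD' : (0 : ℝ) < D := Nat.cast_pos.mpr (by omega)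
  rw [effLoss_eq_reducedLoss]
  exact reducedLoss_two_phases (by positivity) (by positivity) (by positivity) ha hv (by omega)

/-- for D ≥ 2, v ≠ 0 and positive covariance eigenvalues, there is a
critical γ* ∈ (0, ∞) with L_D(γ) < c for 0 < γ < γ* (feature learning phase) and
L_D(γ) = c for γ ≥ γ* (trivial phase). -/
theorem deep_two_phases {n : ℕ} (d₀ : ℕ) (hd₀ : 0 < d₀) (σ : ℝ) (hσ : 0 ≤ σ)
    (v a : Fin n → ℝ) (hv : v ≠ 0) (ha : ∀ i, 0 < a i) (c : ℝ)
    (D : ℕ) (hD : 2 ≤ D) :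
    ∃ γstar : ℝ, 0 < γstar ∧
      (∀ γ : ℝ, 0 < γ → γ < γstar → (⨅ b : ℝ, effLoss d₀ σ v a c D b γ) < c) ∧
      (∀ γ : ℝ, γstar ≤ γ → (⨅ b : ℝ, effLoss d₀ σ v a c D b γ) = c) :=
  deep_two_phases_general d₀ hd₀ σ v a hv ha c D hD
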